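/- arXiv:0911.0065 — 2 statements merged into one kernel-verified Lean document; each statement's English description precedes it below -/
import Mathlib

section
/- Let 0 < q ≤ 1/2 and let v ∈ L²(0,1) with v' ∈ L¹(0,1) (v absolutely continuous on [0,1] with integrable derivative). For every mesh with h = max_i h_i, one has ‖v‖_{L^{2q}(0,1)}^{2q} ≤ Σ_{i=1}^N h_i^{1−q} ‖v‖_{K_i}^{2q} ≤ ‖v‖_{L^{2q}(0,1)}^{2q} + 2 h^{2q} ‖v'‖_{L¹(0,1)}^{2q}, where ‖v‖_{K_i}² = ∫_{K_i} |v|² dx. -/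
/-!
Setting of Huang–He, "Error analysis for equidistributing meshes":
the boundary value problem  −(a u')' + b u' + c u = f on Ω = (0,1), u(0)=u(1)=0,
its linear finite element discretization on a mesh 0 = x₀ < ⋯ < x_N = 1,
and the residual-based equidistribution quantities.
-/

noncomputable section
open MeasureTheory Real

namespace EquidMesh

/-- L² norm on (0,1). -/
def L2 (g : ℝ → ℝ) : ℝ := Real.sqrt (∫ t in (0:ℝ)..1, (g t)^2)

/-- L¹ norm on (0,1). -/
def L1 (g : ℝ → ℝ) : ℝ := ∫ t in (0:ℝ)..1, |g t|

/-- The L^{2/3} quasi-norm on (0,1): (∫₀¹ |g|^{2/3})^{3/2}. -/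
def Lp23 (g : ℝ → ℝ) : ℝ := (∫ t in (0:ℝ)..1, |g t| ^ ((2:ℝ)/3)) ^ ((3:ℝ)/2)

/-- L^∞ norm (essential supremum of |g|) on (0,1). -/
def Linf (g : ℝ → ℝ) : ℝ := essSup (fun t => |g t|) (volume.restrict (Set.Ioo (0:ℝ) 1))

/-- Membership in L²(0,1). -/
def MemL2 (g : ℝ → ℝ) : Prop :=
  Measurable g ∧ IntervalIntegrable (fun t => (g t)^2) volume 0 1

/-- Membership in L^∞(0,1). -/
def MemLinf (g : ℝ → ℝ) : Prop :=
  Measurable g ∧ ∃ M : ℝ, ∀ᵐ x ∂(volume.restrict (Set.Ioo (0:ℝ) 1)), |g x| ≤ M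

/-- `g` is absolutely continuous on [0,1] with derivative `g' ∈ L¹(0,1)`. -/
def HasL1Deriv (g g' : ℝ → ℝ) : Prop :=
  Measurable g' ∧ IntervalIntegrable g' volume 0 1 ∧
    ∀ x ∈ Set.Icc (0:ℝ) 1, g x = g 0 + ∫ t in (0:ℝ)..x, g' t

/-- A function in H¹(0,1): absolutely continuous on [0,1], carried together with its
(a.e.) derivative, which lies in L²(0,1). -/
structure H1 where
  val : ℝ → ℝ
  dval : ℝ → ℝ
  dval_meas : Measurable dval
  dval_int : IntervalIntegrable dval volume 0 1
  dval_sq_int : IntervalIntegrable (fun t => (dval t)^2) volume 0 1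
  ftc : ∀ x ∈ Set.Icc (0:ℝ) 1, val x = val 0 + ∫ t in (0:ℝ)..x, dval t

/-- `u ∈ H²(0,1)`: the derivative `u'` is absolutely continuous with `u'' ∈ L²(0,1)`. -/
def H1.IsH2 (u : H1) : Prop :=
  ∃ u'' : ℝ → ℝ, Measurable u'' ∧ IntervalIntegrable u'' volume 0 1 ∧
    IntervalIntegrable (fun t => (u'' t)^2) volume 0 1 ∧
    ∀ x ∈ Set.Icc (0:ℝ) 1, u.dval x = u.dval 0 + ∫ t in (0:ℝ)..x, u'' t

/-- The coefficients of the elliptic problem on Ω = (0,1):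
`a, b ∈ W^{1,∞}(Ω)`, `c ∈ L^∞(Ω)`, `a ≥ a₀ > 0`, and `c − b'/2 ≥ 0` a.e. -/
structure Coeffs where
  a : ℝ → ℝ
  b : ℝ → ℝ
  c : ℝ → ℝ
  a' : ℝ → ℝ
  b' : ℝ → ℝ
  a0 : ℝ
  a0_pos : 0 < a0
  a_lb : ∀ x ∈ Set.Icc (0:ℝ) 1, a0 ≤ a x
  a'_meas : Measurable a'
  b'_meas : Measurable b'
  c_meas : Measurable c
  a'_int : IntervalIntegrable a' volume 0 1
  b'_int : IntervalIntegrable b' volume 0 1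
  a'_bdd : ∃ M : ℝ, ∀ᵐ x ∂(volume.restrict (Set.Ioo (0:ℝ) 1)), |a' x| ≤ M
  b'_bdd : ∃ M : ℝ, ∀ᵐ x ∂(volume.restrict (Set.Ioo (0:ℝ) 1)), |b' x| ≤ M
  c_bdd : ∃ M : ℝ, ∀ᵐ x ∂(volume.restrict (Set.Ioo (0:ℝ) 1)), |c x| ≤ M
  ftc_a : ∀ x ∈ Set.Icc (0:ℝ) 1, a x = a 0 + ∫ t in (0:ℝ)..x, a' t
  ftc_b : ∀ x ∈ Set.Icc (0:ℝ) 1, b x = b 0 + ∫ t in (0:ℝ)..x, b' t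
  cb_nonneg : ∀ᵐ x ∂(volume.restrict (Set.Ioo (0:ℝ) 1)), 0 ≤ c x - b' x / 2

/-- The bilinear form B(u,v) = ∫₀¹ (a u' v' + b u' v + c u v) dx. -/
def Coeffs.B (P : Coeffs) (u v : H1) : ℝ :=
  ∫ t in (0:ℝ)..1,
    (P.a t * u.dval t * v.dval t + P.b t * u.dval t * v.val t + P.c t * u.val t * v.val t)

/-- The right-hand side functional (f, v) = ∫₀¹ f v dx. -/
def ip (f : ℝ → ℝ) (v : H1) : ℝ := ∫ t in (0:ℝ)..1, f t * v.val t

/-- `u ∈ H¹₀(Ω)` is the weak solution: B(u,v) = (f,v) for all v ∈ H¹₀(Ω). -/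
def Coeffs.IsWeakSolution (P : Coeffs) (f : ℝ → ℝ) (u : H1) : Prop :=
  u.val 0 = 0 ∧ u.val 1 = 0 ∧
    ∀ v : H1, v.val 0 = 0 → v.val 1 = 0 → P.B u v = ip f v

/-- A mesh of N elements of Ω = (0,1): 0 = x₀ < x₁ < ⋯ < x_N = 1. -/
structure Mesh (N : ℕ) where
  x : ℕ → ℝ
  x_zero : x 0 = 0
  x_last : x N = 1
  x_mono : ∀ i < N, x i < x (i+1)

/-- Element length (the element of index `i` is `(x i, x (i+1))`, `0 ≤ i < N`). -/
def Mesh.h {N : ℕ} (m : Mesh N) (i : ℕ) : ℝ := m.x (i+1) - m.x i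

/-- `v` is piecewise linear with respect to the mesh: its derivative is constant
inside each element. -/
def Mesh.IsPL {N : ℕ} (m : Mesh N) (v : H1) : Prop :=
  ∀ i < N, ∃ s : ℝ, ∀ t ∈ Set.Ioo (m.x i) (m.x (i+1)), v.dval t = s

/-- `uh` is the linear finite element solution on the mesh `m`:
a continuous piecewise linear function vanishing at 0 and 1 with
B(u_h, v_h) = (f, v_h) for all piecewise linear v_h vanishing at 0 and 1. -/
def Coeffs.IsFESolution (P : Coeffs) (f : ℝ → ℝ) {N : ℕ} (m : Mesh N) (uh : H1) : Prop :=
  uh.val 0 = 0 ∧ uh.val 1 = 0 ∧ m.IsPL uh ∧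
    ∀ v : H1, v.val 0 = 0 → v.val 1 = 0 → m.IsPL v → P.B uh v = ip f v

/-- The residual of `w`: r = f + a' w' − b w' − c w. -/
def Coeffs.res (P : Coeffs) (f : ℝ → ℝ) (w : H1) : ℝ → ℝ :=
  fun t => f t + P.a' t * w.dval t - P.b t * w.dval t - P.c t * w.val t

/-- The element L² average ⟨g⟩_i = (h_i⁻¹ ∫_{K_i} g²)^{1/2}. -/
def Mesh.avg {N : ℕ} (m : Mesh N) (g : ℝ → ℝ) (i : ℕ) : ℝ :=
  Real.sqrt ((1 / m.h i) * ∫ t in (m.x i)..(m.x (i+1)), (g t)^2)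

/-- The intensity parameter α_h = (Σ_i h_i ⟨g⟩_i^{2/3})³. -/
def Mesh.alpha {N : ℕ} (m : Mesh N) (g : ℝ → ℝ) : ℝ :=
  (∑ i ∈ Finset.range N, m.h i * (m.avg g i) ^ ((2:ℝ)/3)) ^ 3

/-- The adaptation function value ρ_i = (1 + α_h⁻¹ ⟨g⟩_i²)^{1/3}. -/
def Mesh.rho {N : ℕ} (m : Mesh N) (g : ℝ → ℝ) (i : ℕ) : ℝ :=
  (1 + (m.alpha g)⁻¹ * (m.avg g i)^2) ^ ((1:ℝ)/3)

/-- σ_h = Σ_i ρ_i h_i. -/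
def Mesh.sigma {N : ℕ} (m : Mesh N) (g : ℝ → ℝ) : ℝ :=
  ∑ i ∈ Finset.range N, m.rho g i * m.h i

/-- The mesh equidistributes (the piecewise constant adaptation function built from) `g`:
ρ_i h_i = σ_h / N for all elements. -/
def Mesh.IsEquidistributing {N : ℕ} (m : Mesh N) (g : ℝ → ℝ) : Prop :=
  ∀ i < N, m.rho g i * m.h i = m.sigma g / (N:ℝ)

/-- Membership in the mesh set S_N: 1/(ρ₀ N) ≤ h_i ≤ 2/N for all i. -/
def Mesh.InS {N : ℕ} (m : Mesh N) (ρ0 : ℝ) : Prop :=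
  ∀ i < N, 1 / (ρ0 * (N:ℝ)) ≤ m.h i ∧ m.h i ≤ 2 / (N:ℝ)

/-- The maximum norm distance ‖X − X̃‖_∞ between two meshes with the same N. -/
def meshDist {N : ℕ} (m m' : Mesh N) : ℝ :=
  (Finset.range (N+1)).sup' (Finset.nonempty_range_iff.mpr (Nat.succ_ne_zero N))
    (fun i => |m.x i - m'.x i|)

/-- The energy norm squared ‖v‖_E² = ∫₀¹ (a v'² + (c − b'/2) v²) dx. -/
def Coeffs.energySq (P : Coeffs) (v : H1) : ℝ :=
  ∫ t in (0:ℝ)..1, (P.a t * (v.dval t)^2 + (P.c t - P.b' t / 2) * (v.val t)^2)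



/-! ### Auxiliary lemmas for statement11 -/

private lemma rpow_le_aux' {q x : ℝ} (hq0 : 0 ≤ q) (hq1 : q ≤ 1) (hx : 0 ≤ x) :
    x ^ q ≤ q * x + (1 - q) := by
  have h := Real.geom_mean_le_arith_mean2_weighted hq0 (by linarith) hx zero_le_one
    (by ring : q + (1 - q) = 1)
  simpa using h

private lemma rpow_two_mul' {x q : ℝ} (hx : 0 ≤ x) : x ^ (2 * q) = (x ^ 2) ^ q := by
  rw [show (2:ℝ) * q = (2:ℕ) * q by norm_num, Real.rpow_natCast_mul hx]

private lemma rpow_add_le' {p a b : ℝ} (hp0 : 0 < p) (hp1 : p ≤ 1) (ha : 0 ≤ a) (hb : 0 ≤ b) :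
    (a + b) ^ p ≤ a ^ p + b ^ p := by
  have h := NNReal.rpow_add_le_add_rpow a.toNNReal b.toNNReal hp0.le hp1
  have h2 := NNReal.coe_le_coe.2 h
  push_cast [NNReal.coe_rpow, Real.coe_toNNReal _ ha, Real.coe_toNNReal _ hb,
    ← Real.toNNReal_add ha hb, Real.coe_toNNReal _ (by linarith : (0:ℝ) ≤ a + b)] at h2
  exact h2

private lemma int_abs_rpow' {q : ℝ} (hq0 : 0 < q) (hq1 : q ≤ 1) {v : ℝ → ℝ} (hm : Measurable v)
    {a b : ℝ} (hsq : IntervalIntegrable (fun t => (v t)^2) volume a b) :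
    IntervalIntegrable (fun t => |v t| ^ (2*q)) volume a b := by
  have hmeas : Measurable (fun t => |v t| ^ (2*q)) :=
    (Real.continuous_rpow_const (by linarith : (0:ℝ) ≤ 2*q)).measurable.comp hm.abs
  have hg : IntervalIntegrable (fun t => 1 + (v t)^2) volume a b :=
    (intervalIntegrable_const (c := (1:ℝ))).add hsq
  apply hg.mono_fun hmeas.aestronglyMeasurable
  filter_upwards with t
  have h1 : |v t| ^ (2*q) ≤ 1 + (v t)^2 := by
    rcases le_total (|v t|) 1 with h | h
    · have := Real.rpow_le_one (abs_nonneg _) h (by linarith : 0 ≤ 2*q)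
      nlinarith [sq_nonneg (v t)]
    · have h2 : |v t| ^ (2*q) ≤ |v t| ^ (2:ℝ) :=
        Real.rpow_le_rpow_of_exponent_le h (by linarith)
      have h3 : |v t| ^ (2:ℝ) = (v t)^2 := by
        rw [show (2:ℝ) = ((2:ℕ):ℝ) by norm_num, Real.rpow_natCast, sq_abs]
      nlinarith [h2, h3]
  have h0 : 0 ≤ |v t| ^ (2*q) := Real.rpow_nonneg (abs_nonneg _) _
  simp only [Real.norm_eq_abs, abs_of_nonneg h0]
  calc |v t| ^ (2*q) ≤ 1 + (v t)^2 := h1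
    _ ≤ |1 + (v t)^2| := le_abs_self _

private lemma elem_holder' {q : ℝ} (hq0 : 0 < q) (hq1 : q ≤ 1) {v : ℝ → ℝ} (hm : Measurable v)
    {a b : ℝ} (hab : a < b)
    (hsq : IntervalIntegrable (fun t => (v t)^2) volume a b) :
    (∫ t in a..b, |v t| ^ (2*q)) ≤ (b - a) ^ (1-q) * (∫ t in a..b, (v t)^2) ^ q := by
  set I := ∫ t in a..b, (v t)^2 with hI
  have hI0 : 0 ≤ I :=
    intervalIntegral.integral_nonneg hab.le (fun u _ => sq_nonneg _)
  have hba : 0 < b - a := by linarith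
  rcases hI0.eq_or_lt with h0 | hIpos
  · have hae : (fun t => (v t)^2) =ᵐ[volume.restrict (Set.Ioc a b)] 0 := by
      have hint : IntegrableOn (fun t => (v t)^2) (Set.Ioc a b) volume := hsq.1
      have : ∫ t in Set.Ioc a b, (v t)^2 = 0 := by
        rw [← intervalIntegral.integral_of_le hab.le, ← hI, ← h0]
      exact (integral_eq_zero_iff_of_nonneg (fun t => sq_nonneg _) hint).mp this
    have hae2 : (fun t => |v t| ^ (2*q)) =ᵐ[volume.restrict (Set.Ioc a b)] 0 := by
      filter_upwards [hae] with t ht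
      simp only [Pi.zero_apply] at ht ⊢
      have hv0 : v t = 0 := (pow_eq_zero_iff (two_ne_zero)).mp ht
      simp [hv0, Real.zero_rpow (by positivity : 2*q ≠ 0)]
    have : (∫ t in a..b, |v t| ^ (2*q)) = 0 := by
      rw [intervalIntegral.integral_of_le hab.le, integral_congr_ae hae2]
      simp
    rw [this, ← h0, Real.zero_rpow hq0.ne']
    positivity
  · set c := I / (b - a) with hc
    have hcpos : 0 < c := div_pos hIpos hba
    have hpt : ∀ t : ℝ, |v t| ^ (2*q) ≤ (c^q * q / c) * (v t)^2 + c^q * (1-q) := by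
      intro t
      rw [rpow_two_mul' (abs_nonneg _), sq_abs]
      have h1 : ((v t)^2 / c) ^ q ≤ q * ((v t)^2 / c) + (1-q) :=
        rpow_le_aux' hq0.le hq1 (by positivity)
      have h2 : ((v t)^2) ^ q = c^q * ((v t)^2 / c) ^ q := by
        rw [Real.div_rpow (sq_nonneg _) hcpos.le]
        field_simp
      rw [h2]
      have hcq : 0 < c ^ q := Real.rpow_pos_of_pos hcpos q
      calc c^q * ((v t)^2 / c) ^ q ≤ c^q * (q * ((v t)^2 / c) + (1-q)) :=
            mul_le_mul_of_nonneg_left h1 hcq.le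
        _ = (c^q * q / c) * (v t)^2 + c^q * (1-q) := by field_simp
    have hlin : IntervalIntegrable (fun t => (c^q * q / c) * (v t)^2 + c^q * (1-q)) volume a b :=
      (hsq.const_mul _).add intervalIntegrable_const
    have hmono := intervalIntegral.integral_mono_on hab.le
      (int_abs_rpow' hq0 hq1 hm hsq) hlin (fun x _ => hpt x)
    have hval : (∫ t in a..b, ((c^q * q / c) * (v t)^2 + c^q * (1-q)))
        = (c^q * q / c) * I + c^q * (1-q) * (b - a) := by
      rw [intervalIntegral.integral_add (hsq.const_mul _) intervalIntegrable_const,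
        intervalIntegral.integral_const_mul, intervalIntegral.integral_const]
      simp [smul_eq_mul, ← hI]
      ring
    have hfin : (c^q * q / c) * I + c^q * (1-q) * (b - a) = (b - a) ^ (1-q) * I ^ q := by
      have h1 : I / c = b - a := by rw [hc]; field_simp
      have h2 : c ^ q = I ^ q / (b-a) ^ q := by
        rw [hc, Real.div_rpow hI0 hba.le]
      have h3 : (b - a) ^ (1-q) = (b-a) / (b-a)^q := by
        rw [Real.rpow_sub hba, Real.rpow_one]
      have hbq : (0:ℝ) < (b-a)^q := Real.rpow_pos_of_pos hba q
      have e1 : c^q * q / c * I = c^q * q * (b-a) := by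
        rw [div_mul_eq_mul_div, mul_div_assoc, h1]
      rw [e1, h2, h3]
      field_simp
      ring
    calc (∫ t in a..b, |v t| ^ (2*q)) ≤ _ := hmono
      _ = _ := hval
      _ = _ := hfin

private lemma elem_upper' {q : ℝ} (hq0 : 0 < q) (hq2 : 2*q ≤ 1) {v v' : ℝ → ℝ}
    (hm : Measurable v)
    (hint : IntervalIntegrable v' volume 0 1)
    (hftc : ∀ x ∈ Set.Icc (0:ℝ) 1, v x = v 0 + ∫ t in (0:ℝ)..x, v' t)
    {a b : ℝ} (h0a : 0 ≤ a) (hab : a < b) (hb1 : b ≤ 1)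
    (hsq : IntervalIntegrable (fun t => (v t)^2) volume a b) :
    (b - a) ^ (1-q) * (∫ t in a..b, (v t)^2) ^ q
      ≤ (∫ t in a..b, |v t| ^ (2*q)) + (b - a) * (∫ t in a..b, |v' t|) ^ (2*q) := by
  have hq1 : q ≤ 1 := by linarith
  have hba : (0:ℝ) < b - a := by linarith
  have hprim : ContinuousOn (fun x => ∫ t in (0:ℝ)..x, v' t) (Set.Icc (0:ℝ) 1) := by
    have := intervalIntegral.continuousOn_primitive_interval' hint
      (Set.left_mem_uIcc (a := (0:ℝ)) (b := 1))
    rwa [Set.uIcc_of_le zero_le_one] at this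
  have hvc : ContinuousOn v (Set.Icc (0:ℝ) 1) :=
    (continuousOn_const.add hprim).congr hftc
  have habIcc : Set.Icc a b ⊆ Set.Icc (0:ℝ) 1 := Set.Icc_subset_Icc h0a hb1
  have ha01 : a ∈ Set.Icc (0:ℝ) 1 := ⟨h0a, by linarith⟩
  have hb01 : b ∈ Set.Icc (0:ℝ) 1 := ⟨by linarith, hb1⟩
  obtain ⟨y, hy, hmin⟩ := isCompact_Icc.exists_isMinOn (Set.nonempty_Icc.mpr hab.le)
    ((hvc.mono habIcc).abs)
  have hmin' : ∀ x ∈ Set.Icc a b, |v y| ≤ |v x| := fun x hx => hmin hx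
  set m := |v y| with hmdef
  set V := ∫ t in a..b, |v' t| with hVdef
  have hm0 : 0 ≤ m := abs_nonneg _
  have hV0 : 0 ≤ V :=
    intervalIntegral.integral_nonneg hab.le (fun u _ => abs_nonneg _)
  have hsubint : ∀ c d : ℝ, c ∈ Set.Icc (0:ℝ) 1 → d ∈ Set.Icc (0:ℝ) 1 →
      IntervalIntegrable v' volume c d := by
    intro c d hc hd
    refine hint.mono_set ?_
    exact Set.uIcc_subset_uIcc
      (show c ∈ Set.uIcc (0:ℝ) 1 by rw [Set.uIcc_of_le zero_le_one]; exact hc)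
      (show d ∈ Set.uIcc (0:ℝ) 1 by rw [Set.uIcc_of_le zero_le_one]; exact hd)
  have hVint : IntervalIntegrable (fun t => |v' t|) volume a b :=
    (hsubint a b ha01 hb01).abs
  have hbd : ∀ x ∈ Set.Icc a b, |v x| ≤ m + V := by
    intro x hx
    have hx1 : x ∈ Set.Icc (0:ℝ) 1 := habIcc hx
    have hy1 : y ∈ Set.Icc (0:ℝ) 1 := habIcc hy
    have e : v x - v y = ∫ t in y..x, v' t := by
      rw [hftc x hx1, hftc y hy1]
      have := intervalIntegral.integral_interval_sub_left
        (hsubint 0 x ⟨le_refl 0, zero_le_one⟩ hx1)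
        (hsubint 0 y ⟨le_refl 0, zero_le_one⟩ hy1)
      linarith [this]
    have hsubset : Set.uIoc y x ⊆ Set.uIoc a b := by
      rw [Set.uIoc_of_le hab.le]
      intro t ht
      rw [Set.mem_uIoc] at ht
      rw [Set.mem_Ioc]
      rcases ht with ⟨h1, h2⟩ | ⟨h1, h2⟩
      · exact ⟨lt_of_le_of_lt hy.1 h1, le_trans h2 hx.2⟩
      · exact ⟨lt_of_le_of_lt hx.1 h1, le_trans h2 hy.2⟩
    have habs : |∫ t in y..x, v' t| ≤ V := by
      have hA : abs (∫ t in y..x, v' t) ≤ abs (∫ t in y..x, abs (v' t)) := by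
        simpa [Real.norm_eq_abs] using
          intervalIntegral.norm_integral_le_abs_integral_norm
            (f := v') (a := y) (b := x) (μ := volume)
      have hB : abs (∫ t in y..x, abs (v' t)) ≤ abs (∫ t in a..b, abs (v' t)) :=
        intervalIntegral.abs_integral_mono_interval hsubset
          (Filter.Eventually.of_forall (fun t => abs_nonneg _)) hVint
      have hC : abs (∫ t in a..b, abs (v' t)) = V := abs_of_nonneg hV0
      linarith
    have h2 : |v x| ≤ |v y| + |v x - v y| := by
      have h := abs_add_le (v y) (v x - v y)
      have h3 : v y + (v x - v y) = v x := by ring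
      rwa [h3] at h
    have h4 : |v x - v y| ≤ V := by rw [e]; exact habs
    linarith
  have hm2q : (b - a) * m ^ (2*q) ≤ ∫ t in a..b, |v t| ^ (2*q) := by
    have hmono := intervalIntegral.integral_mono_on hab.le
      (intervalIntegrable_const (c := m ^ (2*q)))
      (int_abs_rpow' hq0 hq1 hm hsq)
      (fun x hx => Real.rpow_le_rpow hm0 (hmin' x hx) (by linarith))
    rwa [intervalIntegral.integral_const, smul_eq_mul] at hmono
  have hsqb : (∫ t in a..b, (v t)^2) ≤ (b - a) * (m + V)^2 := by
    have hmono := intervalIntegral.integral_mono_on hab.le hsq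
      (intervalIntegrable_const (c := (m + V)^2))
      (fun x hx => by
        have h1 : |v x| ≤ m + V := hbd x hx
        calc (v x)^2 = |v x|^2 := (sq_abs _).symm
          _ ≤ (m + V)^2 := pow_le_pow_left₀ (abs_nonneg _) h1 2)
    rwa [intervalIntegral.integral_const, smul_eq_mul] at hmono
  have hI0 : 0 ≤ ∫ t in a..b, (v t)^2 :=
    intervalIntegral.integral_nonneg hab.le (fun u _ => sq_nonneg _)
  have hIq : (∫ t in a..b, (v t)^2) ^ q ≤ (b - a) ^ q * (m + V) ^ (2*q) := by
    have h1 : (∫ t in a..b, (v t)^2) ^ q ≤ ((b - a) * (m + V)^2) ^ q :=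
      Real.rpow_le_rpow hI0 hsqb hq0.le
    have h2 : ((b - a) * (m + V)^2) ^ q = (b - a) ^ q * (m + V) ^ (2*q) := by
      rw [Real.mul_rpow hba.le (sq_nonneg _), ← rpow_two_mul' (by positivity : (0:ℝ) ≤ m + V)]
    rw [← h2]; exact h1
  calc (b - a) ^ (1-q) * (∫ t in a..b, (v t)^2) ^ q
      ≤ (b - a) ^ (1-q) * ((b - a) ^ q * (m + V) ^ (2*q)) :=
        mul_le_mul_of_nonneg_left hIq (Real.rpow_nonneg hba.le _)
    _ = (b - a) * (m + V) ^ (2*q) := by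
        rw [← mul_assoc, ← Real.rpow_add hba]; norm_num
    _ ≤ (b - a) * (m ^ (2*q) + V ^ (2*q)) :=
        mul_le_mul_of_nonneg_left (rpow_add_le' (by linarith) hq2 hm0 hV0) hba.le
    _ = (b - a) * m ^ (2*q) + (b - a) * V ^ (2*q) := by ring
    _ ≤ (∫ t in a..b, |v t| ^ (2*q)) + (b - a) * V ^ (2*q) := by linarith

private lemma sum_holder' {p : ℝ} (hp0 : 0 < p) (hp1 : p ≤ 1) {N : ℕ} (h V : ℕ → ℝ)
    (hh : ∀ i ∈ Finset.range N, 0 ≤ h i) (hV : ∀ i ∈ Finset.range N, 0 ≤ V i)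
    (hsum : ∑ i ∈ Finset.range N, h i = 1) :
    ∑ i ∈ Finset.range N, (h i) ^ (1-p) * (V i) ^ p
      ≤ (∑ i ∈ Finset.range N, V i) ^ p := by
  set B := ∑ i ∈ Finset.range N, V i with hB
  have hB0 : 0 ≤ B := Finset.sum_nonneg hV
  rcases hB0.eq_or_lt with h0 | hBpos
  · have hz : ∀ i ∈ Finset.range N, V i = 0 :=
      (Finset.sum_eq_zero_iff_of_nonneg hV).mp h0.symm
    have : ∑ i ∈ Finset.range N, (h i) ^ (1-p) * (V i) ^ p = 0 := by
      apply Finset.sum_eq_zero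
      intro i hi
      rw [hz i hi, Real.zero_rpow hp0.ne', mul_zero]
    rw [this, ← h0, Real.zero_rpow hp0.ne']
  · have hBq : (0:ℝ) < B ^ p := Real.rpow_pos_of_pos hBpos p
    have step : ∀ i ∈ Finset.range N,
        (h i) ^ (1-p) * (V i) ^ p ≤ ((1-p) * h i + p * (V i / B)) * B ^ p := by
      intro i hi
      have hVB : 0 ≤ V i / B := div_nonneg (hV i hi) hB0
      have hgm := Real.geom_mean_le_arith_mean2_weighted (by linarith : (0:ℝ) ≤ 1 - p)
        hp0.le (hh i hi) hVB (by ring)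
      have he : (h i) ^ (1-p) * (V i) ^ p = ((h i) ^ (1-p) * (V i / B) ^ p) * B ^ p := by
        rw [Real.div_rpow (hV i hi) hB0, mul_assoc, div_mul_cancel₀]
        exact hBq.ne'
      rw [he]
      exact mul_le_mul_of_nonneg_right hgm hBq.le
    calc ∑ i ∈ Finset.range N, (h i) ^ (1-p) * (V i) ^ p
        ≤ ∑ i ∈ Finset.range N, ((1-p) * h i + p * (V i / B)) * B ^ p :=
          Finset.sum_le_sum step
      _ = ((1-p) * (∑ i ∈ Finset.range N, h i)
            + p * (∑ i ∈ Finset.range N, V i) / B) * B ^ p := by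
          rw [← Finset.sum_mul]
          congr 1
          rw [Finset.sum_add_distrib, ← Finset.mul_sum, ← Finset.mul_sum]
          congr 1
          rw [mul_div_assoc, ← Finset.sum_div]
      _ = B ^ p := by
          rw [hsum, ← hB]
          field_simp
          ring

/-- refined elementwise bounds for 0 < q ≤ 1/2 when v' ∈ L¹
(Lemma 3.9, |Ω| = 1). -/
theorem statement11 (q : ℝ) (hq0 : 0 < q) (hq1 : q ≤ 1/2)
    (v v' : ℝ → ℝ) (hv : MemL2 v) (hv' : HasL1Deriv v v')
    (N : ℕ) (hN : 0 < N) (m : Mesh N) :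
    (∫ t in (0:ℝ)..1, |v t| ^ (2*q))
        ≤ (∑ i ∈ Finset.range N,
            (m.h i) ^ (1-q) * (∫ t in (m.x i)..(m.x (i+1)), (v t)^2) ^ q) ∧
    (∑ i ∈ Finset.range N,
        (m.h i) ^ (1-q) * (∫ t in (m.x i)..(m.x (i+1)), (v t)^2) ^ q)
        ≤ (∫ t in (0:ℝ)..1, |v t| ^ (2*q))
          + 2 * ((Finset.range N).sup'
                (Finset.nonempty_range_iff.mpr hN.ne') m.h) ^ (2*q)
              * (L1 v') ^ (2*q) := by
  have hqle1 : q ≤ 1 := by linarith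
  have hq2 : 2*q ≤ 1 := by linarith
  -- monotonicity of mesh points
  have key : ∀ j, j ≤ N → ∀ i, i ≤ j → m.x i ≤ m.x j := by
    intro j
    induction j with
    | zero => intro _ i hi; simp [Nat.le_zero.mp hi]
    | succ n ih =>
      intro hn i hi
      rcases Nat.lt_or_ge i (n+1) with hlt | hge
      · have h1 : m.x i ≤ m.x n := ih (by omega) i (by omega)
        have h2 := m.x_mono n (by omega)
        linarith
      · have : i = n+1 := by omega
        simp [this]
  have hx0 : ∀ i, i ≤ N → 0 ≤ m.x i := by
    intro i hi
    have := key i hi 0 (Nat.zero_le _)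
    rwa [m.x_zero] at this
  have hx1 : ∀ i, i ≤ N → m.x i ≤ 1 := by
    intro i hi
    have := key N le_rfl i hi
    rwa [m.x_last] at this
  have hmem : ∀ i, i ≤ N → m.x i ∈ Set.uIcc (0:ℝ) 1 := by
    intro i hi
    rw [Set.uIcc_of_le zero_le_one]
    exact ⟨hx0 i hi, hx1 i hi⟩
  -- element integrability of v^2
  have hsq : ∀ i, i < N → IntervalIntegrable (fun t => (v t)^2) volume (m.x i) (m.x (i+1)) := by
    intro i hi
    exact hv.2.mono_set (Set.uIcc_subset_uIcc (hmem i (by omega)) (hmem (i+1) (by omega)))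
  have habsint : ∀ i, i < N →
      IntervalIntegrable (fun t => |v t| ^ (2*q)) volume (m.x i) (m.x (i+1)) :=
    fun i hi => int_abs_rpow' hq0 hqle1 hv.1 (hsq i hi)
  have hv'int : ∀ i, i < N →
      IntervalIntegrable (fun t => |v' t|) volume (m.x i) (m.x (i+1)) := by
    intro i hi
    exact (hv'.2.1.mono_set
      (Set.uIcc_subset_uIcc (hmem i (by omega)) (hmem (i+1) (by omega)))).abs
  -- splitting the integral over the mesh
  have hsplit : (∫ t in (0:ℝ)..1, |v t| ^ (2*q))
      = ∑ i ∈ Finset.range N, ∫ t in (m.x i)..(m.x (i+1)), |v t| ^ (2*q) := by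
    rw [intervalIntegral.sum_integral_adjacent_intervals (fun k hk => habsint k hk),
      m.x_zero, m.x_last]
  have hsplitV : L1 v' = ∑ i ∈ Finset.range N, ∫ t in (m.x i)..(m.x (i+1)), |v' t| := by
    rw [intervalIntegral.sum_integral_adjacent_intervals (fun k hk => hv'int k hk),
      m.x_zero, m.x_last]
    rfl
  have hh_pos : ∀ i, i < N → 0 < m.h i := by
    intro i hi
    have := m.x_mono i hi
    simp only [Mesh.h]
    linarith
  have hsum1 : ∑ i ∈ Finset.range N, m.h i = 1 := by
    have := Finset.sum_range_sub (fun i => m.x i) N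
    simp only [Mesh.h]
    rw [this, m.x_zero, m.x_last]
    norm_num
  constructor
  · -- lower bound
    rw [hsplit]
    apply Finset.sum_le_sum
    intro i hi
    have hi' := Finset.mem_range.mp hi
    have h := elem_holder' hq0 hqle1 hv.1 (m.x_mono i hi') (hsq i hi')
    simpa [Mesh.h] using h
  · -- upper bound
    set H := (Finset.range N).sup' (Finset.nonempty_range_iff.mpr hN.ne') m.h with hH
    have hH0 : 0 < H := by
      have h0N : (0:ℕ) ∈ Finset.range N := Finset.mem_range.mpr hN
      exact lt_of_lt_of_le (hh_pos 0 hN) (Finset.le_sup' m.h h0N)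
    set Vi := fun i => ∫ t in (m.x i)..(m.x (i+1)), |v' t| with hVi
    have hVi0 : ∀ i ∈ Finset.range N, 0 ≤ Vi i := by
      intro i hi
      exact intervalIntegral.integral_nonneg (m.x_mono i (Finset.mem_range.mp hi)).le
        (fun u _ => abs_nonneg _)
    have step1 : (∑ i ∈ Finset.range N,
        (m.h i) ^ (1-q) * (∫ t in (m.x i)..(m.x (i+1)), (v t)^2) ^ q)
        ≤ (∫ t in (0:ℝ)..1, |v t| ^ (2*q))
          + ∑ i ∈ Finset.range N, m.h i * (Vi i) ^ (2*q) := by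
      rw [hsplit, ← Finset.sum_add_distrib]
      apply Finset.sum_le_sum
      intro i hi
      have hi' := Finset.mem_range.mp hi
      have h := elem_upper' hq0 hq2 hv.1 hv'.2.1 hv'.2.2 (hx0 i (by omega))
        (m.x_mono i hi') (hx1 (i+1) (by omega)) (hsq i hi')
      simpa [Mesh.h, hVi] using h
    have step2 : (∑ i ∈ Finset.range N, m.h i * (Vi i) ^ (2*q))
        ≤ H ^ (2*q) * ∑ i ∈ Finset.range N, (m.h i) ^ (1-2*q) * (Vi i) ^ (2*q) := by
      rw [Finset.mul_sum]
      apply Finset.sum_le_sum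
      intro i hi
      have hi' := Finset.mem_range.mp hi
      have hhp := hh_pos i hi'
      have hiH : m.h i ≤ H := Finset.le_sup' m.h hi
      have e : m.h i = (m.h i) ^ (2*q) * (m.h i) ^ (1-2*q) := by
        rw [← Real.rpow_add hhp]
        norm_num
      calc m.h i * (Vi i) ^ (2*q)
          = (m.h i) ^ (2*q) * ((m.h i) ^ (1-2*q) * (Vi i) ^ (2*q)) := by
            nth_rewrite 1 [e]; ring
        _ ≤ H ^ (2*q) * ((m.h i) ^ (1-2*q) * (Vi i) ^ (2*q)) := by
            apply mul_le_mul_of_nonneg_right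
              (Real.rpow_le_rpow hhp.le hiH (by linarith))
            exact mul_nonneg (Real.rpow_nonneg hhp.le _)
              (Real.rpow_nonneg (hVi0 i hi) _)
    have step3 : (∑ i ∈ Finset.range N, (m.h i) ^ (1-2*q) * (Vi i) ^ (2*q))
        ≤ (∑ i ∈ Finset.range N, Vi i) ^ (2*q) :=
      sum_holder' (by linarith) hq2 m.h Vi
        (fun i hi => (hh_pos i (Finset.mem_range.mp hi)).le) hVi0 hsum1
    have hL1 : (∑ i ∈ Finset.range N, Vi i) = L1 v' := hsplitV.symm
    have hL1nn : 0 ≤ L1 v' := by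
      rw [hsplitV]
      exact Finset.sum_nonneg hVi0
    have hHq : 0 ≤ H ^ (2*q) := Real.rpow_nonneg hH0.le _
    have hLq : 0 ≤ (L1 v') ^ (2*q) := Real.rpow_nonneg hL1nn _
    have final : (∑ i ∈ Finset.range N, m.h i * (Vi i) ^ (2*q))
        ≤ H ^ (2*q) * (L1 v') ^ (2*q) := by
      calc (∑ i ∈ Finset.range N, m.h i * (Vi i) ^ (2*q))
          ≤ H ^ (2*q) * ∑ i ∈ Finset.range N, (m.h i) ^ (1-2*q) * (Vi i) ^ (2*q) := step2
        _ ≤ H ^ (2*q) * (∑ i ∈ Finset.range N, Vi i) ^ (2*q) :=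
            mul_le_mul_of_nonneg_left step3 hHq
        _ = H ^ (2*q) * (L1 v') ^ (2*q) := by rw [hL1]
    have hmulnn : 0 ≤ H ^ (2*q) * (L1 v') ^ (2*q) := mul_nonneg hHq hLq
    calc (∑ i ∈ Finset.range N,
        (m.h i) ^ (1-q) * (∫ t in (m.x i)..(m.x (i+1)), (v t)^2) ^ q)
        ≤ (∫ t in (0:ℝ)..1, |v t| ^ (2*q))
          + ∑ i ∈ Finset.range N, m.h i * (Vi i) ^ (2*q) := step1
      _ ≤ (∫ t in (0:ℝ)..1, |v t| ^ (2*q)) + H ^ (2*q) * (L1 v') ^ (2*q) := by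
          linarith [final]
      _ ≤ (∫ t in (0:ℝ)..1, |v t| ^ (2*q)) + 2 * H ^ (2*q) * (L1 v') ^ (2*q) := by
          nlinarith [hmulnn]

end EquidMesh
end
end

section
/- Let ρ, ρ̃ : (0,1) → ℝ be integrable functions with ρ(x) ≥ 1 and ρ̃(x) ≥ 1 a.e., and set σ = ∫₀¹ ρ dx, σ̃ = ∫₀¹ ρ̃ dx. Let N ≥ 1 and let 0 = y₀ < y₁ < ⋯ < y_N = 1 and 0 = ỹ₀ < ỹ₁ < ⋯ < ỹ_N = 1 satisfy ∫₀^{y_i} ρ dx = (i/N) σ and ∫₀^{ỹ_i} ρ̃ dx = (i/N) σ̃ for i = 1, …, N−1. Then for every i, |y_i − ỹ_i| ≤ 2 ∫₀¹ |ρ(x) − ρ̃(x)| dx. -/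
/-!
Setting of Huang–He, "Error analysis for equidistributing meshes":
the boundary value problem  −(a u')' + b u' + c u = f on Ω = (0,1), u(0)=u(1)=0,
its linear finite element discretization on a mesh 0 = x₀ < ⋯ < x_N = 1,
and the residual-based equidistribution quantities.
-/

noncomputable section
open MeasureTheory Real

namespace EquidMesh

private lemma aux_integral_ge (ρ : ℝ → ℝ)
    (hi : IntervalIntegrable ρ volume 0 1)
    (hlb : ∀ᵐ x ∂(volume.restrict (Set.Ioo (0:ℝ) 1)), 1 ≤ ρ x)
    {a b : ℝ} (h0 : 0 ≤ a) (hab : a ≤ b) (hb1 : b ≤ 1) :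
    b - a ≤ ∫ t in a..b, ρ t := by
  have hsub : Set.uIcc a b ⊆ Set.uIcc (0:ℝ) 1 := by
    rw [Set.uIcc_of_le hab, Set.uIcc_of_le zero_le_one]
    exact Set.Icc_subset_Icc h0 hb1
  have hint : IntervalIntegrable ρ volume a b := hi.mono_set hsub
  have hrestr : volume.restrict (Set.Icc a b) = volume.restrict (Set.Ioo a b) :=
    (Measure.restrict_congr_set Ioo_ae_eq_Icc).symm
  have hae : (fun _ => (1:ℝ)) ≤ᵐ[volume.restrict (Set.Icc a b)] ρ := by
    rw [hrestr]
    exact ae_restrict_of_ae_restrict_of_subset (Set.Ioo_subset_Ioo h0 hb1) hlb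
  have := intervalIntegral.integral_mono_ae_restrict hab
    (intervalIntegrable_const (c := (1:ℝ))) hint hae
  simpa using this

private lemma aux_abs_sub_le (ρ ρ' : ℝ → ℝ)
    (hi : IntervalIntegrable ρ volume 0 1) (hi' : IntervalIntegrable ρ' volume 0 1)
    {c : ℝ} (h0 : 0 ≤ c) (hc : c ≤ 1) :
    |(∫ t in (0:ℝ)..c, ρ t) - ∫ t in (0:ℝ)..c, ρ' t| ≤ ∫ t in (0:ℝ)..1, |ρ t - ρ' t| := by
  have hsub : Set.uIcc (0:ℝ) c ⊆ Set.uIcc (0:ℝ) 1 := by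
    rw [Set.uIcc_of_le h0, Set.uIcc_of_le zero_le_one]
    exact Set.Icc_subset_Icc le_rfl hc
  have hic : IntervalIntegrable ρ volume 0 c := hi.mono_set hsub
  have hic' : IntervalIntegrable ρ' volume 0 c := hi'.mono_set hsub
  have habs : IntervalIntegrable (fun t => |ρ t - ρ' t|) volume 0 1 := (hi.sub hi').abs
  calc |(∫ t in (0:ℝ)..c, ρ t) - ∫ t in (0:ℝ)..c, ρ' t|
      = |∫ t in (0:ℝ)..c, (ρ t - ρ' t)| := by
        rw [intervalIntegral.integral_sub hic hic']
    _ ≤ ∫ t in (0:ℝ)..c, |ρ t - ρ' t| :=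
        intervalIntegral.abs_integral_le_integral_abs h0
    _ ≤ ∫ t in (0:ℝ)..1, |ρ t - ρ' t| :=
        intervalIntegral.integral_mono_interval le_rfl h0 hc
          (Filter.Eventually.of_forall fun x => abs_nonneg _) habs

/-- stability of equidistributing mesh points with respect to the
adaptation function (estimate (lem6.4-2)). -/
theorem statement19 (ρ ρ' : ℝ → ℝ)
    (hm : Measurable ρ) (hm' : Measurable ρ')
    (hi : IntervalIntegrable ρ volume 0 1) (hi' : IntervalIntegrable ρ' volume 0 1)
    (hlb : ∀ᵐ x ∂(volume.restrict (Set.Ioo (0:ℝ) 1)), 1 ≤ ρ x)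
    (hlb' : ∀ᵐ x ∂(volume.restrict (Set.Ioo (0:ℝ) 1)), 1 ≤ ρ' x)
    (N : ℕ) (hN : 1 ≤ N) (y y' : ℕ → ℝ)
    (hy0 : y 0 = 0) (hyN : y N = 1) (hmono : ∀ i < N, y i < y (i+1))
    (hy0' : y' 0 = 0) (hyN' : y' N = 1) (hmono' : ∀ i < N, y' i < y' (i+1))
    (heq : ∀ i : ℕ, 1 ≤ i → i ≤ N - 1 →
      (∫ t in (0:ℝ)..(y i), ρ t) = ((i:ℝ)/(N:ℝ)) * ∫ t in (0:ℝ)..1, ρ t)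
    (heq' : ∀ i : ℕ, 1 ≤ i → i ≤ N - 1 →
      (∫ t in (0:ℝ)..(y' i), ρ' t) = ((i:ℝ)/(N:ℝ)) * ∫ t in (0:ℝ)..1, ρ' t) :
    ∀ i ≤ N, |y i - y' i| ≤ 2 * ∫ t in (0:ℝ)..1, |ρ t - ρ' t| := by
  intro i hiN
  set D := ∫ t in (0:ℝ)..1, |ρ t - ρ' t| with hD
  have hD0 : 0 ≤ D :=
    intervalIntegral.integral_nonneg zero_le_one (fun x _ => abs_nonneg _)
  -- monotonicity of mesh points
  have key : ∀ (z : ℕ → ℝ), (∀ i < N, z i < z (i+1)) →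
      ∀ i j, i ≤ j → j ≤ N → z i ≤ z j := by
    intro z hz i j hij hjN
    induction j with
    | zero => simp [Nat.le_zero.mp hij]
    | succ k ih =>
      rcases Nat.eq_or_lt_of_le hij with rfl | h
      · exact le_rfl
      · exact (ih (by omega) (by omega)).trans (hz k (by omega)).le
  have hy_mem : ∀ j ≤ N, 0 ≤ y j ∧ y j ≤ 1 := fun j hj =>
    ⟨hy0 ▸ key y hmono 0 j (Nat.zero_le _) hj, hyN ▸ key y hmono j N hj le_rfl⟩
  have hy_mem' : ∀ j ≤ N, 0 ≤ y' j ∧ y' j ≤ 1 := fun j hj =>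
    ⟨hy0' ▸ key y' hmono' 0 j (Nat.zero_le _) hj, hyN' ▸ key y' hmono' j N hj le_rfl⟩
  rcases Nat.eq_zero_or_pos i with rfl | hi1
  · simp [hy0, hy0', hD0]
  rcases Nat.eq_or_lt_of_le hiN with rfl | hiltN
  · simp [hyN, hyN', hD0]
  have hile : i ≤ N - 1 := by omega
  -- the key interval integrability facts
  obtain ⟨ha0, ha1⟩ := hy_mem i hiN
  obtain ⟨hb0, hb1⟩ := hy_mem' i hiN
  have hsubi : Set.uIcc (0:ℝ) (y i) ⊆ Set.uIcc (0:ℝ) 1 := by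
    rw [Set.uIcc_of_le ha0, Set.uIcc_of_le zero_le_one]
    exact Set.Icc_subset_Icc le_rfl ha1
  have hsubi' : Set.uIcc (0:ℝ) (y' i) ⊆ Set.uIcc (0:ℝ) 1 := by
    rw [Set.uIcc_of_le hb0, Set.uIcc_of_le zero_le_one]
    exact Set.Icc_subset_Icc le_rfl hb1
  have hiyi : IntervalIntegrable ρ volume 0 (y i) := hi.mono_set hsubi
  have hiyi' : IntervalIntegrable ρ volume 0 (y' i) := hi.mono_set hsubi'
  -- Step 1 : |y i - y' i| ≤ |F (y i) - F (y' i)|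
  have hsubFF : (∫ t in (0:ℝ)..(y i), ρ t) - (∫ t in (0:ℝ)..(y' i), ρ t)
      = ∫ t in (y' i)..(y i), ρ t :=
    intervalIntegral.integral_interval_sub_left hiyi hiyi'
  have step1 : |y i - y' i| ≤
      |(∫ t in (0:ℝ)..(y i), ρ t) - (∫ t in (0:ℝ)..(y' i), ρ t)| := by
    rcases le_total (y' i) (y i) with hab | hab
    · have h1 : y i - y' i ≤ ∫ t in (y' i)..(y i), ρ t :=
        aux_integral_ge ρ hi hlb hb0 hab ha1
      rw [hsubFF, abs_of_nonneg (le_trans (by linarith) h1),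
        abs_of_nonneg (by linarith)]
      exact h1
    · have h1 : y' i - y i ≤ ∫ t in (y i)..(y' i), ρ t :=
        aux_integral_ge ρ hi hlb ha0 hab hb1
      have h2 : (∫ t in (0:ℝ)..(y' i), ρ t) - (∫ t in (0:ℝ)..(y i), ρ t)
          = ∫ t in (y i)..(y' i), ρ t :=
        intervalIntegral.integral_interval_sub_left hiyi' hiyi
      rw [abs_sub_comm (y i), abs_sub_comm (∫ t in (0:ℝ)..(y i), ρ t), h2,
        abs_of_nonneg (le_trans (by linarith) h1), abs_of_nonneg (by linarith)]
      exact h1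
  -- Step 2
  have hFy : (∫ t in (0:ℝ)..(y i), ρ t) = ((i:ℝ)/(N:ℝ)) * ∫ t in (0:ℝ)..1, ρ t :=
    heq i hi1 hile
  have hFy' : (∫ t in (0:ℝ)..(y' i), ρ' t) = ((i:ℝ)/(N:ℝ)) * ∫ t in (0:ℝ)..1, ρ' t :=
    heq' i hi1 hile
  have hsig : |(∫ t in (0:ℝ)..1, ρ t) - ∫ t in (0:ℝ)..1, ρ' t| ≤ D :=
    aux_abs_sub_le ρ ρ' hi hi' zero_le_one le_rfl
  have hdel : |(∫ t in (0:ℝ)..(y' i), ρ t) - ∫ t in (0:ℝ)..(y' i), ρ' t| ≤ D :=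
    aux_abs_sub_le ρ ρ' hi hi' hb0 hb1
  have hfrac0 : (0:ℝ) ≤ (i:ℝ)/(N:ℝ) := by positivity
  have hfrac1 : (i:ℝ)/(N:ℝ) ≤ 1 := by
    rw [div_le_one (by exact_mod_cast Nat.pos_of_ne_zero (by omega))]
    exact_mod_cast hiN
  have step2 : |(∫ t in (0:ℝ)..(y i), ρ t) - (∫ t in (0:ℝ)..(y' i), ρ t)| ≤ 2 * D := by
    have hdecomp : (∫ t in (0:ℝ)..(y i), ρ t) - (∫ t in (0:ℝ)..(y' i), ρ t)
        = ((i:ℝ)/(N:ℝ)) * ((∫ t in (0:ℝ)..1, ρ t) - ∫ t in (0:ℝ)..1, ρ' t)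
          - ((∫ t in (0:ℝ)..(y' i), ρ t) - ∫ t in (0:ℝ)..(y' i), ρ' t) := by
      rw [hFy, hFy']; ring
    rw [hdecomp]
    calc |((i:ℝ)/(N:ℝ)) * ((∫ t in (0:ℝ)..1, ρ t) - ∫ t in (0:ℝ)..1, ρ' t)
          - ((∫ t in (0:ℝ)..(y' i), ρ t) - ∫ t in (0:ℝ)..(y' i), ρ' t)|
        ≤ |((i:ℝ)/(N:ℝ)) * ((∫ t in (0:ℝ)..1, ρ t) - ∫ t in (0:ℝ)..1, ρ' t)|
          + |(∫ t in (0:ℝ)..(y' i), ρ t) - ∫ t in (0:ℝ)..(y' i), ρ' t| :=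
          abs_sub _ _
      _ ≤ 1 * D + D := by
          refine add_le_add ?_ hdel
          rw [abs_mul, abs_of_nonneg hfrac0]
          exact mul_le_mul hfrac1 hsig (abs_nonneg _) zero_le_one
      _ = 2 * D := by ring
  exact step1.trans step2

end EquidMesh
end
end
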